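/- arXiv:2006.05114 — 3 statements merged into one kernel-verified Lean document; each statement's English description precedes it below -/
import Mathlib

section
/- Let n ≥ 2 be an integer and ε > 0. With f_n^ε as in the LER construction, for all ρ ≥ 0 one has √ρ·|(f_n^ε)'(ρ)| ≤ 2n/ε. -/
open Real Complex

/-!
For `ρ ≥ ε²` the derivative is `1/ρ`, so `√ρ·f' = 1/√ρ ≤ 1/ε`. Below `ε²`, writing
`q_n^ε(ρ) = log ε² - Q(t)` with `t = 1 - ρ/ε² ∈ [0, 1]`, it is `Q'(t)/ε²`,
and `Q'(t) ≤ (n + 1) + (n - 1) = 2n` while `√ρ ≤ ε`. The coefficients of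
`q_n^ε` give `Q(0) = 0` and `Q'(0) = 1`, so `f_n^ε` is differentiable at `ε²` with derivative
`1/ε²` and `deriv` takes no junk value there.
-/

/-- `q_n^ε`, the polynomial part of the locally regularized logarithm on `[0, ε²)`. -/
noncomputable def qfun (n : ℕ) (ε ρ : ℝ) : ℝ :=
  Real.log (ε ^ 2) - ((n + 1 : ℝ) / n) * (1 - ρ / ε ^ 2) ^ n
    - ∑ k ∈ Finset.Icc 1 (n - 1), (1 / (k : ℝ)) * (1 - ρ / ε ^ 2) ^ k

/-- The locally regularized logarithm `f_n^ε` of the LER construction: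
`f_n^ε(ρ) = ln ρ` for `ρ ≥ ε²`, and `f_n^ε(ρ) = q_n^ε(ρ)` for `0 ≤ ρ < ε²`. -/
noncomputable def freg (n : ℕ) (ε ρ : ℝ) : ℝ :=
  if ε ^ 2 ≤ ρ then Real.log ρ else qfun n ε ρ

open Finset

/-- With `t = 1 - ρ/ε²`, `q_n^ε(ρ) = log ε² - Q(t)` where `Q(t) = (n+1)/n·tⁿ + Σ_{1≤k<n} tᵏ/k`;
this is `Q'(t)`. -/
noncomputable def qpolyDeriv (n : ℕ) (t : ℝ) : ℝ :=
  (n + 1) * t ^ (n - 1) + ∑ k ∈ Icc 1 (n - 1), t ^ (k - 1)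

theorem hasDerivAt_qfun {n : ℕ} (hn : n ≠ 0) (ε ρ : ℝ) :
    HasDerivAt (qfun n ε) (qpolyDeriv n (1 - ρ / ε ^ 2) / ε ^ 2) ρ := by
  have ht : HasDerivAt (fun x => 1 - x / ε ^ 2) (-(1 / ε ^ 2)) ρ := by
    simpa using ((hasDerivAt_id ρ).div_const (ε ^ 2)).const_sub 1
  refine (((hasDerivAt_const ρ (Real.log (ε ^ 2))).sub
    ((ht.pow n).const_mul ((n + 1 : ℝ) / n))).sub
    (HasDerivAt.fun_sum (u := Icc 1 (n - 1)) fun k _ =>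
      (ht.pow k).const_mul (1 / (k : ℝ)))).congr_deriv ?_
  have hsum : ∀ k ∈ Icc 1 (n - 1), 1 / (k : ℝ) * (k * (1 - ρ / ε ^ 2) ^ (k - 1) * -(1 / ε ^ 2))
      = -((1 - ρ / ε ^ 2) ^ (k - 1) / ε ^ 2) := fun k hk => by
    have : (k : ℝ) ≠ 0 := by have := (mem_Icc.1 hk).1; positivity
    field_simp
  rw [sum_congr rfl hsum, sum_neg_distrib, ← sum_div, qpolyDeriv]
  field_simp
  ring

theorem qpolyDeriv_nonneg (n : ℕ) {t : ℝ} (ht : 0 ≤ t) : 0 ≤ qpolyDeriv n t := by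
  unfold qpolyDeriv; positivity

theorem qpolyDeriv_le {n : ℕ} (hn : n ≠ 0) {t : ℝ} (h0 : 0 ≤ t) (h1 : t ≤ 1) :
    qpolyDeriv n t ≤ 2 * n := by
  have hpow : ∀ m : ℕ, t ^ m ≤ 1 := fun m => pow_le_one₀ h0 h1
  have hsum : ∑ k ∈ Icc 1 (n - 1), t ^ (k - 1) ≤ n - 1 := by
    calc ∑ k ∈ Icc 1 (n - 1), t ^ (k - 1) ≤ ∑ _k ∈ Icc 1 (n - 1), (1 : ℝ) :=
          sum_le_sum fun k _ => hpow _
      _ = n - 1 := by simp [Nat.cast_sub (Nat.one_le_iff_ne_zero.2 hn)]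
  have := mul_le_of_le_one_right (by positivity : (0 : ℝ) ≤ n + 1) (hpow (n - 1))
  unfold qpolyDeriv
  linarith

theorem qpolyDeriv_zero {n : ℕ} (hn : 2 ≤ n) : qpolyDeriv n 0 = 1 := by
  rw [qpolyDeriv, zero_pow (by omega), mul_zero, zero_add,
    sum_eq_single_of_mem 1 (mem_Icc.2 ⟨le_rfl, by omega⟩)]
  · simp
  · intro k hk hk1
    exact zero_pow (by have := (mem_Icc.1 hk).1; omega)

theorem qfun_sq {n : ℕ} (hn : n ≠ 0) {ε : ℝ} (hε : ε ≠ 0) :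
    qfun n ε (ε ^ 2) = Real.log (ε ^ 2) := by
  rw [qfun, div_self (pow_ne_zero 2 hε), sub_self, zero_pow hn,
    sum_eq_zero fun k hk => by rw [zero_pow (by have := (mem_Icc.1 hk).1; omega), mul_zero]]
  ring

theorem hasDerivAt_freg_of_lt {n : ℕ} (hn : n ≠ 0) {ε ρ : ℝ} (hρ : ρ < ε ^ 2) :
    HasDerivAt (freg n ε) (qpolyDeriv n (1 - ρ / ε ^ 2) / ε ^ 2) ρ :=
  (hasDerivAt_qfun hn ε ρ).congr_of_eventuallyEq <| by
    filter_upwards [Iio_mem_nhds hρ] with x hx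
    exact if_neg (not_le.2 hx)

theorem freg_eqOn_Iic {n : ℕ} (hn : n ≠ 0) {ε : ℝ} (hε : ε ≠ 0) :
    Set.EqOn (freg n ε) (qfun n ε) (Set.Iic (ε ^ 2)) := fun x hx => by
  rcases (Set.mem_Iic.1 hx).lt_or_eq with hx | rfl
  · exact if_neg (not_le.2 hx)
  · rw [freg, if_pos le_rfl, qfun_sq hn hε]

theorem hasDerivAt_freg_of_le {n : ℕ} (hn : 2 ≤ n) {ε ρ : ℝ} (hε : ε ≠ 0) (hρ : ε ^ 2 ≤ ρ) :
    HasDerivAt (freg n ε) ρ⁻¹ ρ := by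
  have hρ0 : 0 < ρ := (by positivity : (0 : ℝ) < ε ^ 2).trans_le hρ
  rcases hρ.lt_or_eq with hlt | rfl
  · refine (hasDerivAt_log hρ0.ne').congr_of_eventuallyEq ?_
    filter_upwards [Ioi_mem_nhds hlt] with x hx
    exact if_pos hx.le
  have hn0 : n ≠ 0 := by omega
  have hleft : HasDerivWithinAt (freg n ε) (ε ^ 2)⁻¹ (Set.Iic (ε ^ 2)) (ε ^ 2) := by
    have h := (hasDerivAt_qfun hn0 ε (ε ^ 2)).hasDerivWithinAt (s := Set.Iic (ε ^ 2))
    rw [div_self hρ0.ne', sub_self, qpolyDeriv_zero hn, one_div] at h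
    exact h.congr (freg_eqOn_Iic hn0 hε) (freg_eqOn_Iic hn0 hε Set.self_mem_Iic)
  have hright : HasDerivWithinAt (freg n ε) (ε ^ 2)⁻¹ (Set.Ici (ε ^ 2)) (ε ^ 2) :=
    (hasDerivAt_log hρ0.ne').hasDerivWithinAt.congr (fun x hx => if_pos hx) (if_pos le_rfl)
  simpa [Set.Iic_union_Ici] using hleft.union hright

/-- For `n ≥ 2`, `ε > 0` and all `ρ ≥ 0`, `√ρ |(f_n^ε)'(ρ)| ≤ 2n/ε`. -/
theorem stmt8 (n : ℕ) (hn : 2 ≤ n) (ε : ℝ) (hε : 0 < ε) :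
    ∀ ρ : ℝ, 0 ≤ ρ →
      Real.sqrt ρ * |deriv (freg n ε) ρ| ≤ 2 * n / ε := by
  intro ρ hρ0
  rcases lt_or_ge ρ (ε ^ 2) with hρ | hρ
  · have ht0 : 0 ≤ 1 - ρ / ε ^ 2 := by
      rw [sub_nonneg, div_le_one (by positivity)]; exact hρ.le
    have ht1 : 1 - ρ / ε ^ 2 ≤ 1 := by linarith [div_nonneg hρ0 (sq_nonneg ε)]
    have hD0 := qpolyDeriv_nonneg n ht0
    rw [(hasDerivAt_freg_of_lt (by omega) hρ).deriv, abs_of_nonneg (by positivity)]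
    calc √ρ * (qpolyDeriv n (1 - ρ / ε ^ 2) / ε ^ 2) ≤ ε * (2 * n / ε ^ 2) := by
          gcongr
          · exact (sqrt_le_left hε.le).2 hρ.le
          · exact qpolyDeriv_le (by omega) ht0 ht1
      _ = 2 * n / ε := by field_simp
  · have hερ : ε ≤ √ρ := (le_sqrt hε.le hρ0).2 hρ
    rw [(hasDerivAt_freg_of_le hn hε.ne' hρ).deriv, abs_of_nonneg (inv_nonneg.2 hρ0),
      ← div_eq_mul_inv, sqrt_div_self']
    calc 1 / √ρ ≤ 1 / ε := one_div_le_one_div_of_le hε hερ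
      _ ≤ 2 * n / ε := by gcongr; norm_cast; omega
end

section
/- Let 0 < α < 2, λ ∈ ℝ, n ≥ 2, ε > 0, and let u₀ : ℝ^d → ℂ be measurable with ∫ |u₀|^α < ∞. Then |∫ λ(F(|u₀(x)|²) − F_n^ε(|u₀(x)|²)) dx| ≤ |λ|·(∫|u₀|^α dx)·ε^{2−α}/(1 − α/2). -/
/-!
The bound holds pointwise, so no Fubini argument is needed. For `ρ < ε²` put `t = 1 - ρ/ε²`;
then `F(ρ) - F_n^ε(ρ) = ρ (log(1 - t) + ∑_{k ≤ n} tᵏ/k)`, and since the partial sums of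
`-log(1 - t) = ∑ tᵏ/k` are nonnegative and below their limit, `|F - F_n^ε| ≤ ρ log(ε²/ρ)`.
With `β = 1 - α/2`, the inequality `log x ≤ x^β/β` turns this into
`ρ^{α/2} ε^{2-α}/(1 - α/2)`, which for `ρ = |u₀|²` integrates to the claim.
-/

open Real Complex MeasureTheory

/-- The interaction energy density `F(ρ) = ρ ln ρ − ρ` (with `F(0) = 0`,
automatic since `Real.log 0 = 0`). -/
noncomputable def Fd (ρ : ℝ) : ℝ := ρ * Real.log ρ - ρ

/-- `Q_n^ε`, the degree-`n` Taylor polynomial of `ln ρ − 1` at `ρ = ε²`. -/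
noncomputable def Qpoly (n : ℕ) (ε ρ : ℝ) : ℝ :=
  Real.log (ε ^ 2) - 1 - ∑ k ∈ Finset.Icc 1 n, (1 / (k : ℝ)) * (1 - ρ / ε ^ 2) ^ k

/-- The local energy regularization `F_n^ε`: equals `F` on `[ε², ∞)` and the
degree-`(n+1)` polynomial `ρ Q_n^ε(ρ)` on `[0, ε²)`. -/
noncomputable def Freg (n : ℕ) (ε ρ : ℝ) : ℝ :=
  if ε ^ 2 ≤ ρ then Fd ρ else ρ * Qpoly n ε ρ

lemma sum_Icc_one_div_mul_pow_le_neg_log {t : ℝ} (ht0 : 0 ≤ t) (ht1 : t < 1) (n : ℕ) :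
    ∑ k ∈ Finset.Icc 1 n, (1 / (k : ℝ)) * t ^ k ≤ -Real.log (1 - t) := by
  have hsum : ∑ k ∈ Finset.Icc 1 n, (1 / (k : ℝ)) * t ^ k
      = ∑ i ∈ Finset.range n, t ^ (i + 1) / (i + 1) := by
    rw [← Finset.Ico_add_one_right_eq_Icc, Finset.sum_Ico_eq_sum_range]
    refine Finset.sum_congr (by norm_num) fun i _ => ?_
    push_cast
    ring
  rw [hsum]
  exact sum_le_hasSum _ (fun i _ => by positivity)
    (hasSum_pow_div_log_of_abs_lt_one (by rwa [abs_of_nonneg ht0]))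

lemma Fd_sub_Freg_of_lt {n : ℕ} {ε ρ : ℝ} (hρ : ρ < ε ^ 2) :
    Fd ρ - Freg n ε ρ = ρ * (Real.log ρ - Real.log (ε ^ 2) +
      ∑ k ∈ Finset.Icc 1 n, (1 / (k : ℝ)) * (1 - ρ / ε ^ 2) ^ k) := by
  simp only [Freg, if_neg hρ.not_ge, Fd, Qpoly]
  ring

lemma abs_Fd_sub_Freg_le_mul_log (n : ℕ) {ε ρ : ℝ} (hρ0 : 0 ≤ ρ) (hρ : ρ < ε ^ 2) :
    |Fd ρ - Freg n ε ρ| ≤ ρ * (Real.log (ε ^ 2) - Real.log ρ) := by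
  rw [Fd_sub_Freg_of_lt hρ, abs_mul, abs_of_nonneg hρ0]
  rcases hρ0.eq_or_lt with rfl | hρ0
  · simp
  refine mul_le_mul_of_nonneg_left ?_ hρ0.le
  have hε2 : 0 < ε ^ 2 := hρ0.trans hρ
  have hq : ρ / ε ^ 2 ≤ 1 := (div_le_one hε2).2 hρ.le
  have hS0 : 0 ≤ ∑ k ∈ Finset.Icc 1 n, (1 / (k : ℝ)) * (1 - ρ / ε ^ 2) ^ k :=
    Finset.sum_nonneg fun k _ => mul_nonneg (by positivity) (pow_nonneg (by linarith) k)
  have hS1 : ∑ k ∈ Finset.Icc 1 n, (1 / (k : ℝ)) * (1 - ρ / ε ^ 2) ^ k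
      ≤ Real.log (ε ^ 2) - Real.log ρ := by
    have h := sum_Icc_one_div_mul_pow_le_neg_log (t := 1 - ρ / ε ^ 2) (by linarith)
      (by have := div_pos hρ0 hε2; linarith) n
    rwa [sub_sub_cancel, Real.log_div hρ0.ne' hε2.ne', neg_sub] at h
  rw [abs_le]
  constructor <;> linarith

lemma mul_sub_log_le_rpow {ρ s β : ℝ} (hρ : 0 ≤ ρ) (hs : 0 < s) (hβ : 0 < β) :
    ρ * (Real.log s - Real.log ρ) ≤ ρ ^ (1 - β) * s ^ β / β := by
  rcases hρ.eq_or_lt with rfl | hρ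
  · simp only [zero_mul]
    positivity
  calc ρ * (Real.log s - Real.log ρ) = ρ * Real.log (s / ρ) := by
        rw [Real.log_div hs.ne' hρ.ne']
    _ ≤ ρ * ((s / ρ) ^ β / β) :=
      mul_le_mul_of_nonneg_left (Real.log_le_rpow_div (by positivity) hβ) hρ.le
    _ = ρ ^ (1 - β) * s ^ β / β := by
      rw [Real.div_rpow hs.le hρ.le, Real.rpow_sub hρ, Real.rpow_one]
      field_simp

lemma abs_Fd_sub_Freg_le (n : ℕ) {ε ρ α : ℝ} (hε : 0 < ε) (hρ : 0 ≤ ρ) (hα : α < 2) :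
    |Fd ρ - Freg n ε ρ| ≤ ρ ^ (α / 2) * ε ^ ((2 : ℝ) - α) / (1 - α / 2) := by
  have hβ : 0 < 1 - α / 2 := by linarith
  by_cases hle : ε ^ 2 ≤ ρ
  · simp only [Freg, if_pos hle, sub_self, abs_zero]
    positivity
  have hpow : (ε ^ 2) ^ (1 - α / 2) = ε ^ ((2 : ℝ) - α) := by
    rw [← Real.rpow_natCast, ← Real.rpow_mul hε.le]
    ring_nf
  have h := (abs_Fd_sub_Freg_le_mul_log n hρ (not_le.1 hle)).trans
    (mul_sub_log_le_rpow hρ (by positivity) hβ)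
  rwa [sub_sub_cancel, hpow] at h

theorem stmt13_general (d : ℕ) (α : ℝ) (hα2 : α < 2) (lam : ℝ)
    (n : ℕ) (ε : ℝ) (hε : 0 < ε) (u₀ : (Fin d → ℝ) → ℂ)
    (hint : Integrable (fun x => ‖u₀ x‖ ^ α)) :
    |∫ x, lam * (Fd (‖u₀ x‖ ^ 2) - Freg n ε (‖u₀ x‖ ^ 2))| ≤
      |lam| * (∫ x, ‖u₀ x‖ ^ α) * ε ^ ((2 : ℝ) - α) / (1 - α / 2) := by
  set C := ε ^ ((2 : ℝ) - α) / (1 - α / 2)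
  have hpt : ∀ x, ‖lam * (Fd (‖u₀ x‖ ^ 2) - Freg n ε (‖u₀ x‖ ^ 2))‖
      ≤ |lam| * (‖u₀ x‖ ^ α * C) := by
    intro x
    have hpow : (‖u₀ x‖ ^ 2) ^ (α / 2) = ‖u₀ x‖ ^ α := by
      rw [← Real.rpow_natCast, ← Real.rpow_mul (norm_nonneg _)]
      ring_nf
    have h := abs_Fd_sub_Freg_le n hε (sq_nonneg ‖u₀ x‖) hα2
    rw [hpow, mul_div_assoc] at h
    rw [Real.norm_eq_abs, abs_mul]
    exact mul_le_mul_of_nonneg_left h (abs_nonneg lam)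
  calc |∫ x, lam * (Fd (‖u₀ x‖ ^ 2) - Freg n ε (‖u₀ x‖ ^ 2))|
      ≤ ∫ x, |lam| * (‖u₀ x‖ ^ α * C) :=
        norm_integral_le_of_norm_le ((hint.mul_const C).const_mul |lam|) (ae_of_all _ hpt)
    _ = |lam| * (∫ x, ‖u₀ x‖ ^ α) * C := by
        rw [integral_const_mul, integral_mul_const, mul_assoc]
    _ = |lam| * (∫ x, ‖u₀ x‖ ^ α) * ε ^ ((2 : ℝ) - α) / (1 - α / 2) :=
        (mul_div_assoc _ _ _).symm

/-- Convergence of the regularized energy on `ℝ^d` for data in `L^α`, `0 < α < 2`: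
`|∫ λ(F(|u₀|²) − F_n^ε(|u₀|²))| ≤ |λ| ‖u₀‖_{L^α}^α ε^{2−α}/(1 − α/2)`. -/
theorem stmt13 (d : ℕ) (α : ℝ) (hα0 : 0 < α) (hα2 : α < 2) (lam : ℝ)
    (n : ℕ) (hn : 2 ≤ n) (ε : ℝ) (hε : 0 < ε) (u₀ : (Fin d → ℝ) → ℂ)
    (hu : Measurable u₀)
    (hint : Integrable (fun x => ‖u₀ x‖ ^ α)) :
    |∫ x, lam * (Fd (‖u₀ x‖ ^ 2) - Freg n ε (‖u₀ x‖ ^ 2))| ≤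
      |lam| * (∫ x, ‖u₀ x‖ ^ α) * ε ^ ((2 : ℝ) - α) / (1 - α / 2) :=
  stmt13_general d α hα2 lam n ε hε u₀ hint
end

section
/- Let n ≥ 2, 0 < ε ≤ 1, D > 0, and suppose ε ≤ min(√n/D, e^{−3n}). Then for all complex numbers y, z with |y| ≤ D and |z| ≤ D, one has |y·f_n^ε(|y|²) − z·f_n^ε(|z|²)| ≤ 4 ln(ε^{−1})·|y − z|. -/
/-!
By symmetry let `a = ‖y‖ ≥ b = ‖z‖` and split
`y f(a²) - z f(b²) = (y - z) f(a²) + z (f(a²) - f(b²))`, with `f = f_n^ε`.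
Writing the polynomial part as `ln ε² - G(1 - ρ/ε²)` with `G = qpoly n` monotone,
vanishing at `0` and `2n`-Lipschitz on `[0, 1]`, `f` is monotone,
`|f| ≤ 2 ln ε⁻¹ + 2n` on `[0, n/ε²] ⊇ [0, D²]`, and `b (f(a²) - f(b²)) ≤ 4n (a - b)`:
below `ε` from the Lipschitz bound on `G`, above `ε` from `ln x ≤ x - 1`.
Hence the left side is at most `(2 ln ε⁻¹ + 6n) ‖y - z‖`, and `3n ≤ ln ε⁻¹`.
-/

open Real Complex

open Set

noncomputable def qpoly (n : ℕ) (u : ℝ) : ℝ :=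
  ((n + 1 : ℝ) / n) * u ^ n + ∑ k ∈ Finset.Icc 1 (n - 1), (1 / (k : ℝ)) * u ^ k

lemma qfun_eq_log_sub_qpoly (n : ℕ) (ε ρ : ℝ) :
    qfun n ε ρ = Real.log (ε ^ 2) - qpoly n (1 - ρ / ε ^ 2) := by
  unfold qfun qpoly; ring

lemma abs_pow_sub_pow_le_of_abs_le_one {α : Type*} [CommRing α] [LinearOrder α]
    [IsStrictOrderedRing α] {u v : α} (hu : |u| ≤ 1) (hv : |v| ≤ 1) (k : ℕ) :
    |v ^ k - u ^ k| ≤ k * |v - u| :=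
  calc |v ^ k - u ^ k| ≤ |v - u| * k * max |v| |u| ^ (k - 1) := abs_pow_sub_pow_le ..
    _ ≤ |v - u| * k * 1 := by gcongr; exact pow_le_one₀ (by positivity) (max_le hv hu)
    _ = k * |v - u| := by ring

lemma qpoly_zero {n : ℕ} (hn : n ≠ 0) : qpoly n 0 = 0 := by
  rw [qpoly, zero_pow hn, mul_zero, zero_add]
  refine Finset.sum_eq_zero fun k hk => ?_
  rw [zero_pow (by have := (Finset.mem_Icc.1 hk).1; omega), mul_zero]

lemma qpoly_monotoneOn (n : ℕ) : MonotoneOn (qpoly n) (Ici 0) := by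
  intro u hu v _ huv
  unfold qpoly
  gcongr

lemma qpoly_sub_le {n : ℕ} (hn : n ≠ 0) {u v : ℝ} (hu : 0 ≤ u) (huv : u ≤ v) (hv : v ≤ 1) :
    qpoly n v - qpoly n u ≤ 2 * n * (v - u) := by
  have hpow (k : ℕ) : v ^ k - u ^ k ≤ k * (v - u) := by
    have h := abs_pow_sub_pow_le_of_abs_le_one (u := u) (v := v)
      (abs_le.2 ⟨by linarith, by linarith⟩) (abs_le.2 ⟨by linarith, hv⟩) k
    rw [abs_of_nonneg (sub_nonneg.2 huv)] at h
    exact (le_abs_self _).trans h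
  have hsum : ∑ k ∈ Finset.Icc 1 (n - 1), (1 / (k : ℝ)) * (v ^ k - u ^ k)
      ≤ ∑ _k ∈ Finset.Icc 1 (n - 1), (v - u) := by
    refine Finset.sum_le_sum fun k hk => ?_
    have hk : (0 : ℝ) < k := by exact_mod_cast (Finset.mem_Icc.1 hk).1
    calc (1 / (k : ℝ)) * (v ^ k - u ^ k) ≤ (1 / k) * (k * (v - u)) := by gcongr; exact hpow k
      _ = v - u := by field_simp
  have hcard : ((Finset.Icc 1 (n - 1)).card : ℝ) = n - 1 := by
    rw [Nat.card_Icc, Nat.add_sub_cancel, Nat.cast_sub (Nat.one_le_iff_ne_zero.2 hn), Nat.cast_one]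
  have hn' : (0 : ℝ) < n := by positivity
  calc qpoly n v - qpoly n u
      = ((n + 1 : ℝ) / n) * (v ^ n - u ^ n)
        + ∑ k ∈ Finset.Icc 1 (n - 1), (1 / (k : ℝ)) * (v ^ k - u ^ k) := by
        simp only [qpoly, mul_sub, Finset.sum_sub_distrib]; ring
    _ ≤ ((n + 1 : ℝ) / n) * (n * (v - u)) + (n - 1) * (v - u) := by
        rw [Finset.sum_const, nsmul_eq_mul, hcard] at hsum
        gcongr
        exact hpow n
    _ = 2 * n * (v - u) := by field_simp; ring

lemma freg_of_le_sq {n : ℕ} (hn : n ≠ 0) {ε ρ : ℝ} (hε : 0 < ε) (hρ : ρ ≤ ε ^ 2) :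
    freg n ε ρ = qfun n ε ρ := by
  rcases hρ.lt_or_eq with hρ | rfl
  · rw [freg, if_neg hρ.not_ge]
  · rw [freg, if_pos le_rfl, qfun_eq_log_sub_qpoly, div_self (by positivity), sub_self,
      qpoly_zero hn, sub_zero]

lemma freg_of_sq_le (n : ℕ) {ε ρ : ℝ} (hρ : ε ^ 2 ≤ ρ) : freg n ε ρ = Real.log ρ :=
  if_pos hρ

lemma freg_monotoneOn {n : ℕ} (hn : n ≠ 0) {ε : ℝ} (hε : 0 < ε) :
    MonotoneOn (freg n ε) (Ici 0) := by
  have hε2 : 0 < ε ^ 2 := by positivity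
  rw [← Icc_union_Ici_eq_Ici hε2.le]
  refine MonotoneOn.union_right ?_ ?_ (isGreatest_Icc hε2.le) isLeast_Ici
  · intro ρ hρ σ hσ hρσ
    rw [freg_of_le_sq hn hε hρ.2, freg_of_le_sq hn hε hσ.2, qfun_eq_log_sub_qpoly,
      qfun_eq_log_sub_qpoly, sub_le_sub_iff_left]
    refine qpoly_monotoneOn n ?_ ?_ (by gcongr)
    · rw [mem_Ici, sub_nonneg, div_le_one hε2]; exact hσ.2
    · rw [mem_Ici, sub_nonneg, div_le_one hε2]; exact hρ.2
  · intro ρ hρ σ _ hρσ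
    rw [freg_of_sq_le n hρ, freg_of_sq_le n (le_trans hρ hρσ)]
    exact Real.log_le_log (hε2.trans_le hρ) hρσ

lemma abs_freg_le {n : ℕ} (hn : n ≠ 0) {ε ρ : ℝ} (hε : 0 < ε) (hε1 : ε ≤ 1)
    (hρ0 : 0 ≤ ρ) (hρ : ρ ≤ n / ε ^ 2) :
    |freg n ε ρ| ≤ 2 * Real.log ε⁻¹ + 2 * n := by
  have hlogε : Real.log (ε ^ 2) = -2 * Real.log ε⁻¹ := by
    rw [Real.log_pow, Real.log_inv]; push_cast; ring
  have hn1 : (1 : ℝ) ≤ n := by exact_mod_cast Nat.one_le_iff_ne_zero.2 hn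
  have hε2 : 0 < ε ^ 2 := by positivity
  have hε4 : ε ^ 2 ≤ n / ε ^ 2 := by
    rw [le_div_iff₀ hε2]; nlinarith [pow_le_one₀ hε.le hε1 (n := 2)]
  have hlower : freg n ε 0 ≤ freg n ε ρ := freg_monotoneOn hn hε (mem_Ici.2 le_rfl) hρ0 hρ0
  have hupper : freg n ε ρ ≤ freg n ε (n / ε ^ 2) :=
    freg_monotoneOn hn hε hρ0 (hε2.le.trans hε4) hρ
  have hq1 : qpoly n 1 ≤ 2 * n := by
    simpa [qpoly_zero hn] using qpoly_sub_le hn le_rfl zero_le_one le_rfl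
  rw [freg_of_le_sq hn hε hε2.le, qfun_eq_log_sub_qpoly, zero_div, sub_zero, hlogε] at hlower
  rw [freg_of_sq_le n hε4, Real.log_div (by positivity) hε2.ne', hlogε] at hupper
  have hlogn : Real.log n ≤ n := (Real.log_le_sub_one_of_pos (by positivity)).trans (by linarith)
  rw [abs_le]
  constructor <;> linarith

lemma mul_log_sq_sub_log_sq_le {a b : ℝ} (ha : 0 < a) (hb : 0 < b) :
    b * (Real.log (a ^ 2) - Real.log (b ^ 2)) ≤ 2 * (a - b) := by
  have h := Real.log_le_sub_one_of_pos (div_pos ha hb)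
  rw [Real.log_pow, Real.log_pow, ← mul_sub, ← Real.log_div ha.ne' hb.ne']
  calc b * (((2 : ℕ) : ℝ) * Real.log (a / b)) ≤ b * (2 * (a / b - 1)) := by push_cast; gcongr
    _ = 2 * (a - b) := by field_simp

lemma mul_freg_sq_sub_le_of_le_eps {n : ℕ} (hn : n ≠ 0) {ε a b : ℝ} (hε : 0 < ε)
    (hb : 0 ≤ b) (hba : b ≤ a) (haε : a ≤ ε) :
    b * (freg n ε (a ^ 2) - freg n ε (b ^ 2)) ≤ 4 * n * (a - b) := by
  have hε2 : 0 < ε ^ 2 := by positivity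
  have ha2 : a ^ 2 ≤ ε ^ 2 := by gcongr; linarith
  have hb2 : b ^ 2 ≤ ε ^ 2 := by gcongr; linarith
  rw [freg_of_le_sq hn hε ha2, freg_of_le_sq hn hε hb2, qfun_eq_log_sub_qpoly,
    qfun_eq_log_sub_qpoly, sub_sub_sub_cancel_left]
  have hq := qpoly_sub_le hn (u := 1 - a ^ 2 / ε ^ 2) (v := 1 - b ^ 2 / ε ^ 2)
    (by rw [sub_nonneg, div_le_one hε2]; exact ha2) (by gcongr)
    (by have : 0 ≤ b ^ 2 / ε ^ 2 := by positivity
        linarith)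
  have hab : b * (a + b) ≤ 2 * ε ^ 2 := by nlinarith
  calc b * (qpoly n (1 - b ^ 2 / ε ^ 2) - qpoly n (1 - a ^ 2 / ε ^ 2))
      ≤ b * (2 * n * ((1 - b ^ 2 / ε ^ 2) - (1 - a ^ 2 / ε ^ 2))) := by gcongr
    _ = 2 * n * (a - b) * (b * (a + b)) / ε ^ 2 := by field_simp; ring
    _ ≤ 2 * n * (a - b) * (2 * ε ^ 2) / ε ^ 2 := by gcongr
    _ = 4 * n * (a - b) := by field_simp; ring

lemma mul_abs_freg_sq_sub_le {n : ℕ} (hn : n ≠ 0) {ε a b : ℝ} (hε : 0 < ε)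
    (hb : 0 ≤ b) (hba : b ≤ a) :
    b * |freg n ε (a ^ 2) - freg n ε (b ^ 2)| ≤ 4 * n * (a - b) := by
  have hn1 : (1 : ℝ) ≤ n := by exact_mod_cast Nat.one_le_iff_ne_zero.2 hn
  have hmono {s t : ℝ} (hs : 0 ≤ s) (hst : s ≤ t) : freg n ε (s ^ 2) ≤ freg n ε (t ^ 2) :=
    freg_monotoneOn hn hε (sq_nonneg s) (sq_nonneg t) (by gcongr)
  have hlog {s t : ℝ} (hεs : ε ≤ s) (hst : s ≤ t) :
      s * (freg n ε (t ^ 2) - freg n ε (s ^ 2)) ≤ 4 * n * (t - s) := by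
    have hs : 0 < s := hε.trans_le hεs
    have hs2 : ε ^ 2 ≤ s ^ 2 := by gcongr
    have ht2 : ε ^ 2 ≤ t ^ 2 := by gcongr; exact hεs.trans hst
    rw [freg_of_sq_le n hs2, freg_of_sq_le n ht2]
    nlinarith [mul_log_sq_sub_log_sq_le (hs.trans_le hst) hs]
  rw [abs_of_nonneg (sub_nonneg.2 (hmono hb hba))]
  rcases le_total a ε with haε | haε
  · exact mul_freg_sq_sub_le_of_le_eps hn hε hb hba haε
  rcases le_total ε b with hεb | hbε
  · exact hlog hεb hba
  -- split `[b, a]` at `ε`; on `[ε, a]` the weight `b` may be raised to `ε` by monotonicity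
  have h₁ : b * (freg n ε (a ^ 2) - freg n ε (ε ^ 2))
      ≤ ε * (freg n ε (a ^ 2) - freg n ε (ε ^ 2)) :=
    mul_le_mul_of_nonneg_right hbε (sub_nonneg.2 (hmono hε.le haε))
  have h₂ := hlog le_rfl haε
  have h₃ := mul_freg_sq_sub_le_of_le_eps hn hε hb hbε le_rfl
  linarith

lemma norm_mul_ofReal_sub_mul_ofReal_le {y z : ℂ} {A B M K : ℝ} (hA : |A| ≤ M)
    (hAB : ‖z‖ * |A - B| ≤ K * (‖y‖ - ‖z‖)) (hK : 0 ≤ K) :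
    ‖y * (A : ℂ) - z * (B : ℂ)‖ ≤ (M + K) * ‖y - z‖ := by
  have hyz : ‖y‖ - ‖z‖ ≤ ‖y - z‖ := norm_sub_norm_le y z
  calc ‖y * (A : ℂ) - z * (B : ℂ)‖ = ‖(y - z) * (A : ℂ) + z * ((A - B : ℝ) : ℂ)‖ := by
        push_cast; ring_nf
    _ ≤ ‖y - z‖ * |A| + ‖z‖ * |A - B| := by
        refine (norm_add_le _ _).trans_eq ?_
        rw [norm_mul, norm_mul, Complex.norm_real, Complex.norm_real, Real.norm_eq_abs,
          Real.norm_eq_abs]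
    _ ≤ ‖y - z‖ * M + K * ‖y - z‖ := add_le_add (by gcongr) (hAB.trans (by gcongr))
    _ = (M + K) * ‖y - z‖ := by ring

/-- For `n ≥ 2`, `0 < ε ≤ 1` with `ε ≤ min(√n/D, e^{−3n})`, and `|y|, |z| ≤ D`:
`|y f_n^ε(|y|²) − z f_n^ε(|z|²)| ≤ 4 ln(ε⁻¹)|y − z|`. -/
theorem stmt18 (n : ℕ) (hn : 2 ≤ n) (ε : ℝ) (hε : 0 < ε) (hε1 : ε ≤ 1)
    (D : ℝ) (hD : 0 < D)
    (hεsmall : ε ≤ min (Real.sqrt n / D) (Real.exp (-(3 * n : ℝ))))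
    (y z : ℂ) (hy : ‖y‖ ≤ D) (hz : ‖z‖ ≤ D) :
    ‖y * (freg n ε (‖y‖ ^ 2) : ℝ) -
        z * (freg n ε (‖z‖ ^ 2) : ℝ)‖ ≤
      4 * Real.log ε⁻¹ * ‖y - z‖ := by
  have hn0 : n ≠ 0 := by omega
  have hL : 3 * n ≤ Real.log ε⁻¹ := by
    have := Real.log_le_log hε (hεsmall.trans (min_le_right _ _))
    rw [Real.log_exp] at this
    rw [Real.log_inv]; linarith
  wlog hzy : ‖z‖ ≤ ‖y‖ generalizing y z
  · rw [norm_sub_rev, norm_sub_rev y]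
    exact this z y hz hy (le_of_not_ge hzy)
  have hsq : ‖y‖ ^ 2 ≤ n / ε ^ 2 := by
    have hyε : ‖y‖ * ε ≤ Real.sqrt n := by
      calc ‖y‖ * ε ≤ D * ε := by gcongr
        _ ≤ Real.sqrt n := by rw [← le_div_iff₀' hD]; exact hεsmall.trans (min_le_left _ _)
    rw [le_div_iff₀ (by positivity), ← mul_pow, ← Real.sq_sqrt (Nat.cast_nonneg n)]
    gcongr
  calc _ ≤ (2 * Real.log ε⁻¹ + 2 * n + 4 * n) * ‖y - z‖ :=
        norm_mul_ofReal_sub_mul_ofReal_le (abs_freg_le hn0 hε hε1 (sq_nonneg _) hsq)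
          (mul_abs_freg_sq_sub_le hn0 hε (norm_nonneg z) hzy) (by positivity)
    _ ≤ 4 * Real.log ε⁻¹ * ‖y - z‖ := by gcongr; linarith
end
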